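/- Let N, B, T, k be natural numbers with N ≥ 2, B ≥ 1, 2^(T−1) ≤ N ≤ 2^T, and 2^(2^(k+1)) − 1 > B. Then 2·⌈(T : ℝ)/2^k⌉ ≤ 4·⌈log_{B+1} N + log_{B+1} 2⌉, where ⌈·⌉ denotes the real ceiling and log_b denotes the real logarithm to base b. -/

import Mathlib

/-!
Since `B + 1 ≤ 2 ^ 2 ^ (k + 1)`, we have `log₂ (B + 1) ≤ 2 ^ (k + 1)`, and `2 ^ T ≤ 2N` gives
`T ≤ log₂ (2N)`; dividing, `T / 2 ^ (k + 1) ≤ log_{B+1} (2N)`. Passing from `2 ^ k` to `2 ^ (k + 1)`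
inside the ceiling costs another factor 2, by `⌈x⌉ ≤ 2 ⌈x / 2⌉`.
-/

theorem Nat.two_pow_le_two_mul_of_two_pow_pred_le {n N : ℕ} (h : 2 ^ (n - 1) ≤ N) :
    2 ^ n ≤ 2 * N := by
  cases n with
  | zero => simp at h ⊢; omega
  | succ n => simpa [pow_succ', Nat.mul_le_mul_left_iff] using h

theorem Real.div_le_logb_of_le_pow {a b x : ℝ} {m n : ℕ} (ha : 0 < a) (hb : 1 < b)
    (hbm : b ≤ a ^ m) (hx : a ^ n ≤ x) : (n : ℝ) / m ≤ logb b x := by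
  have hm : 0 < m := Nat.pos_of_ne_zero (by rintro rfl; simp at hbm; linarith)
  have hlogb_a : 1 ≤ m * logb b a := by
    calc 1 = logb b b := (logb_self_eq_one hb).symm
      _ ≤ logb b (a ^ m) := logb_le_logb_of_le hb (by linarith) hbm
      _ = m * logb b a := logb_pow b a m
  calc (n : ℝ) / m ≤ n * logb b a := by
        rw [div_le_iff₀ (by exact_mod_cast hm)]
        nlinarith [(Nat.cast_nonneg n : (0 : ℝ) ≤ n)]
    _ = logb b (a ^ n) := (logb_pow b a n).symm
    _ ≤ logb b x := logb_le_logb_of_le hb (by positivity) hx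

theorem Int.ceil_le_two_mul_ceil_half {R : Type*} [Field R] [LinearOrder R] [FloorRing R]
    [IsOrderedRing R] (x : R) : ⌈x⌉ ≤ 2 * ⌈x / 2⌉ := by
  calc ⌈x⌉ = ⌈x / 2 + x / 2⌉ := by rw [add_halves]
    _ ≤ ⌈x / 2⌉ + ⌈x / 2⌉ := Int.ceil_add_le _ _
    _ = 2 * ⌈x / 2⌉ := (two_mul _).symm

theorem stmt_0_general (N B T k : ℕ) (hB : 1 ≤ B)
    (hT1 : 2 ^ (T - 1) ≤ N)
    (hk : B < 2 ^ (2 ^ (k + 1)) - 1) :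
    2 * ⌈(T : ℝ) / 2 ^ k⌉ ≤
      4 * ⌈Real.logb ((B : ℝ) + 1) (N : ℝ) + Real.logb ((B : ℝ) + 1) 2⌉ := by
  have hbase : (1 : ℝ) < B + 1 := by norm_cast; omega
  have hbase_le : (B : ℝ) + 1 ≤ 2 ^ 2 ^ (k + 1) := by norm_cast; omega
  have htwo_pow_le : (2 : ℝ) ^ T ≤ N * 2 := by
    norm_cast; linarith [Nat.two_pow_le_two_mul_of_two_pow_pred_le hT1]
  have hN : (N : ℝ) ≠ 0 := by
    norm_cast; have := Nat.one_le_two_pow (n := T - 1); omega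
  have hlogb : (T : ℝ) / 2 ^ k / 2 ≤
      Real.logb ((B : ℝ) + 1) N + Real.logb ((B : ℝ) + 1) 2 := by
    rw [← Real.logb_mul hN two_ne_zero, div_div, ← pow_succ]
    exact_mod_cast Real.div_le_logb_of_le_pow two_pos hbase hbase_le htwo_pow_le
  calc 2 * ⌈(T : ℝ) / 2 ^ k⌉ ≤ 2 * (2 * ⌈(T : ℝ) / 2 ^ k / 2⌉) := by
        gcongr; exact Int.ceil_le_two_mul_ceil_half _
    _ ≤ 4 * ⌈Real.logb ((B : ℝ) + 1) N + Real.logb ((B : ℝ) + 1) 2⌉ := by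
        rw [← mul_assoc]; gcongr; norm_num

theorem stmt_0 (N B T k : ℕ) (hN : 2 ≤ N) (hB : 1 ≤ B)
    (hT1 : 2 ^ (T - 1) ≤ N) (hT2 : N ≤ 2 ^ T)
    (hk : B < 2 ^ (2 ^ (k + 1)) - 1) :
    2 * ⌈(T : ℝ) / 2 ^ k⌉ ≤
      4 * ⌈Real.logb ((B : ℝ) + 1) (N : ℝ) + Real.logb ((B : ℝ) + 1) 2⌉ :=
  stmt_0_general N B T k hB hT1 hk
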